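/- Let (t_n) satisfy t_n = t₀ + κn for κ > 0, let T > 0 and N = max{n ∈ ℕ : t₀ + κn ≤ t₀ + T}, and let w : [t₀, ∞) → [0, ∞) satisfy w(t) ≤ θ^n W₀ + E(1 + ∑_{j=0}^{n-1} θ^j) on [t_n, t_{n+1}] for n ≥ 1 and w(t) ≤ W₀ + E on [t₀, t₁], with 0 < θ < 1, W₀, E ≥ 0. Then (1/T)∫_{t₀}^{t₀+T} w(t) dt ≤ (κ/T) W₀ ∑_{n=0}^N θ^n + (E/T)(κ + T + T ∑_{j=0}^{N-1} θ^j), and consequently limsup_{T→∞} (1/T)∫_{t₀}^{t₀+T} w(t) dt ≤ E(1 + 1/(1−θ)). -/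
import Mathlib

open MeasureTheory Filter

lemma geo_sum_le {θ : ℝ} (h0 : 0 ≤ θ) (h1 : θ < 1) (n : ℕ) :
    ∑ j ∈ Finset.range n, θ ^ j ≤ 1 / (1 - θ) := by
  rw [le_div_iff₀ (by linarith)]
  have h := geom_sum_mul θ n
  have hp := pow_nonneg h0 n
  nlinarith [h, hp]

lemma stmt18_aux (t₀ κ T θ W₀ E : ℝ) (hκ : 0 < κ) (hT : 0 < T)
    (hθ0 : 0 < θ) (hθ1 : θ < 1) (hW : 0 ≤ W₀) (hE : 0 ≤ E)
    (N : ℕ) (hN1 : (N : ℝ) * κ ≤ T) (hN2 : ∀ n : ℕ, (n : ℝ) * κ ≤ T → n ≤ N)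
    (w : ℝ → ℝ) (hpos : ∀ s, 0 ≤ w s)
    (hInt : MeasureTheory.LocallyIntegrable w MeasureTheory.volume)
    (h0 : ∀ s ∈ Set.Icc t₀ (t₀ + κ), w s ≤ W₀ + E)
    (hn : ∀ n : ℕ, 1 ≤ n → ∀ s ∈ Set.Icc (t₀ + κ * n) (t₀ + κ * (n + 1)),
      w s ≤ θ ^ n * W₀ + E * (1 + ∑ j ∈ Finset.range n, θ ^ j)) :
    (1 / T) * (∫ s in t₀..(t₀ + T), w s) ≤
        (κ / T) * W₀ * ∑ n ∈ Finset.range (N + 1), θ ^ n +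
          (E / T) * (κ + T + T * ∑ j ∈ Finset.range N, θ ^ j) := by
  have hii : ∀ x y : ℝ, IntervalIntegrable w volume x y := fun x y =>
    (hInt.integrableOn_isCompact isCompact_uIcc).intervalIntegrable
  -- T < (N+1) κ
  have hTle : T ≤ κ * (N + 1) := by
    by_contra hc
    push_neg at hc
    have h2 : ((N + 1 : ℕ) : ℝ) * κ ≤ T := by push_cast; nlinarith
    have := hN2 (N + 1) h2
    omega
  set S : ℕ → ℝ := fun n => ∑ j ∈ Finset.range n, θ ^ j with hS
  set B : ℕ → ℝ := fun n => θ ^ n * W₀ + E * (1 + S n) with hB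
  have hbound : ∀ n : ℕ, ∀ s ∈ Set.Icc (t₀ + κ * n) (t₀ + κ * (n + 1)), w s ≤ B n := by
    intro n s hs
    rcases Nat.eq_zero_or_pos n with h | h
    · subst h
      simp only [Nat.cast_zero, mul_zero, add_zero, zero_add, mul_one] at hs
      have : w s ≤ W₀ + E := h0 s hs
      simp only [hB, hS, pow_zero, one_mul, Finset.range_zero, Finset.sum_empty, add_zero,
        mul_one]
      linarith
    · exact hn n h s hs
  have hstep : ∀ n : ℕ, (∫ s in (t₀ + κ * n)..(t₀ + κ * (n + 1)), w s) ≤ κ * B n := by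
    intro n
    have hab : t₀ + κ * n ≤ t₀ + κ * ((n : ℝ) + 1) := by nlinarith
    calc (∫ s in (t₀ + κ * n)..(t₀ + κ * (n + 1)), w s)
        ≤ ∫ _ in (t₀ + κ * n)..(t₀ + κ * (n + 1)), B n :=
          intervalIntegral.integral_mono_on hab (hii _ _) intervalIntegrable_const (hbound n)
      _ = κ * B n := by
          rw [intervalIntegral.integral_const, smul_eq_mul]; ring
  have hsplit : (∫ s in t₀..(t₀ + κ * (N + 1)), w s) =
      ∑ n ∈ Finset.range (N + 1), ∫ s in (t₀ + κ * n)..(t₀ + κ * (n + 1)), w s := by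
    have h := intervalIntegral.sum_integral_adjacent_intervals
      (a := fun k : ℕ => t₀ + κ * k) (μ := volume) (f := w) (n := N + 1)
      (fun k _ => hii _ _)
    simp only [Nat.cast_zero, mul_zero, add_zero, Nat.cast_add, Nat.cast_one] at h
    rw [← h]
  have hI1 : (∫ s in t₀..(t₀ + T), w s) ≤ ∫ s in t₀..(t₀ + κ * (N + 1)), w s := by
    apply intervalIntegral.integral_mono_interval (le_refl t₀) (by linarith) (by linarith)
    · exact Filter.Eventually.of_forall fun s => hpos s
    · exact hii _ _
  -- sum bound
  have hBn : ∀ n ∈ Finset.range (N + 1),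
      (∫ s in (t₀ + κ * n)..(t₀ + κ * (n + 1)), w s) ≤ κ * B n := fun n _ => hstep n
  have hsum : (∫ s in t₀..(t₀ + T), w s) ≤ ∑ n ∈ Finset.range (N + 1), κ * B n := by
    calc (∫ s in t₀..(t₀ + T), w s) ≤ ∫ s in t₀..(t₀ + κ * (N + 1)), w s := hI1
      _ = ∑ n ∈ Finset.range (N + 1), ∫ s in (t₀ + κ * n)..(t₀ + κ * (n + 1)), w s := hsplit
      _ ≤ ∑ n ∈ Finset.range (N + 1), κ * B n := Finset.sum_le_sum hBn
  have hSnonneg : ∀ n, 0 ≤ S n := fun n =>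
    Finset.sum_nonneg fun j _ => pow_nonneg hθ0.le j
  have hSmono : ∀ n ≤ N, S n ≤ S N := by
    intro n hnN
    apply Finset.sum_le_sum_of_subset_of_nonneg (Finset.range_subset_range.mpr hnN)
    intro j _ _; exact pow_nonneg hθ0.le j
  have key : κ * ∑ n ∈ Finset.range (N + 1), (1 + S n) ≤ κ + T + T * S N := by
    have h1 : ∑ n ∈ Finset.range (N + 1), (1 + S n) =
        (N + 1 : ℝ) + ∑ n ∈ Finset.range (N + 1), S n := by
      rw [Finset.sum_add_distrib]; simp
    have h2 : ∑ n ∈ Finset.range (N + 1), S n ≤ (N : ℝ) * S N := by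
      rw [Finset.sum_range_succ']
      have hS0 : S 0 = 0 := by simp [hS]
      rw [hS0, add_zero]
      calc ∑ i ∈ Finset.range N, S (i + 1) ≤ ∑ _i ∈ Finset.range N, S N :=
            Finset.sum_le_sum fun i hi => hSmono (i + 1) (Finset.mem_range.mp hi)
        _ = (N : ℝ) * S N := by simp [Finset.sum_const, nsmul_eq_mul]
    have h3 : κ * ∑ n ∈ Finset.range (N + 1), S n ≤ κ * ((N : ℝ) * S N) :=
      mul_le_mul_of_nonneg_left h2 hκ.le
    have h4 : ((N : ℝ) * κ) * S N ≤ T * S N :=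
      mul_le_mul_of_nonneg_right hN1 (hSnonneg N)
    nlinarith [hSnonneg N]
  have hsum2 : ∑ n ∈ Finset.range (N + 1), κ * B n =
      κ * W₀ * S (N + 1) + E * (κ * ∑ n ∈ Finset.range (N + 1), (1 + S n)) := by
    have e1 : ∀ n, κ * B n = (κ * W₀) * θ ^ n + (E * κ) * (1 + S n) := fun n => by
      simp only [hB]; ring
    simp_rw [e1, Finset.sum_add_distrib, ← Finset.mul_sum]
    simp only [hS]
    rw [Finset.sum_add_distrib]
    ring
  have main : (∫ s in t₀..(t₀ + T), w s) ≤
      κ * W₀ * S (N + 1) + E * (κ + T + T * S N) := by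
    have := mul_le_mul_of_nonneg_left key hE
    calc (∫ s in t₀..(t₀ + T), w s) ≤ ∑ n ∈ Finset.range (N + 1), κ * B n := hsum
      _ = κ * W₀ * S (N + 1) + E * (κ * ∑ n ∈ Finset.range (N + 1), (1 + S n)) := hsum2
      _ ≤ κ * W₀ * S (N + 1) + E * (κ + T + T * S N) := by linarith
  have heq : (κ / T) * W₀ * S (N + 1) + (E / T) * (κ + T + T * S N) =
      (1 / T) * (κ * W₀ * S (N + 1) + E * (κ + T + T * S N)) := by
    field_simp
  calc (1 / T) * (∫ s in t₀..(t₀ + T), w s)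
      ≤ (1 / T) * (κ * W₀ * S (N + 1) + E * (κ + T + T * S N)) :=
        mul_le_mul_of_nonneg_left main (by positivity)
    _ = (κ / T) * W₀ * S (N + 1) + (E / T) * (κ + T + T * S N) := heq.symm

/-- Time-average bound for a piecewise geometrically decaying function
    (key computation in Theorem 5.1). -/
theorem stmt18 (t₀ κ T θ W₀ E : ℝ) (hκ : 0 < κ) (hT : 0 < T)
    (hθ0 : 0 < θ) (hθ1 : θ < 1) (hW : 0 ≤ W₀) (hE : 0 ≤ E)
    (N : ℕ) (hN1 : (N : ℝ) * κ ≤ T) (hN2 : ∀ n : ℕ, (n : ℝ) * κ ≤ T → n ≤ N)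
    (w : ℝ → ℝ) (hpos : ∀ s, 0 ≤ w s)
    (hInt : MeasureTheory.LocallyIntegrable w MeasureTheory.volume)
    (h0 : ∀ s ∈ Set.Icc t₀ (t₀ + κ), w s ≤ W₀ + E)
    (hn : ∀ n : ℕ, 1 ≤ n → ∀ s ∈ Set.Icc (t₀ + κ * n) (t₀ + κ * (n + 1)),
      w s ≤ θ ^ n * W₀ + E * (1 + ∑ j ∈ Finset.range n, θ ^ j)) :
    (1 / T) * (∫ s in t₀..(t₀ + T), w s) ≤
        (κ / T) * W₀ * ∑ n ∈ Finset.range (N + 1), θ ^ n +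
          (E / T) * (κ + T + T * ∑ j ∈ Finset.range N, θ ^ j) ∧
      Filter.limsup (fun S => (1 / S) * ∫ s in t₀..(t₀ + S), w s) Filter.atTop ≤
        E * (1 + 1 / (1 - θ)) := by
  have hii : ∀ x y : ℝ, IntervalIntegrable w volume x y := fun x y =>
    (hInt.integrableOn_isCompact isCompact_uIcc).intervalIntegrable
  refine ⟨stmt18_aux t₀ κ T θ W₀ E hκ hT hθ0 hθ1 hW hE N hN1 hN2 w hpos hInt h0 hn, ?_⟩
  set f : ℝ → ℝ := fun S => (1 / S) * ∫ s in t₀..(t₀ + S), w s with hf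
  set C : ℝ := κ * W₀ * (1 / (1 - θ)) + E * κ with hC
  set L : ℝ := E * (1 + 1 / (1 - θ)) with hL
  set g : ℝ → ℝ := fun S => C / S + L with hg
  have hθd : (0:ℝ) < 1 - θ := by linarith
  have hgt : Tendsto g atTop (nhds L) := by
    have h1 : Tendsto (fun S : ℝ => C / S) atTop (nhds 0) :=
      tendsto_const_nhds.div_atTop tendsto_id
    simpa using h1.add (tendsto_const_nhds (x := L))
  have hfg : ∀ᶠ S in atTop, f S ≤ g S := by
    filter_upwards [eventually_gt_atTop (0:ℝ)] with S hS
    set M : ℕ := ⌊S / κ⌋₊ with hM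
    have hM1 : (M : ℝ) * κ ≤ S :=
      (le_div_iff₀ hκ).mp (Nat.floor_le (div_nonneg hS.le hκ.le))
    have hM2 : ∀ m : ℕ, (m : ℝ) * κ ≤ S → m ≤ M := fun m hm =>
      Nat.le_floor ((le_div_iff₀ hκ).mpr hm)
    have h1 := stmt18_aux t₀ κ S θ W₀ E hκ hS hθ0 hθ1 hW hE M hM1 hM2 w hpos hInt h0 hn
    have g1 : ∑ n ∈ Finset.range (M + 1), θ ^ n ≤ 1 / (1 - θ) := geo_sum_le hθ0.le hθ1 _
    have g2 : ∑ j ∈ Finset.range M, θ ^ j ≤ 1 / (1 - θ) := geo_sum_le hθ0.le hθ1 _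
    have b1 : (κ / S) * W₀ * ∑ n ∈ Finset.range (M + 1), θ ^ n ≤
        (κ / S) * W₀ * (1 / (1 - θ)) :=
      mul_le_mul_of_nonneg_left g1 (by positivity)
    have b2 : (E / S) * (κ + S + S * ∑ j ∈ Finset.range M, θ ^ j) ≤
        (E / S) * (κ + S + S * (1 / (1 - θ))) := by
      apply mul_le_mul_of_nonneg_left _ (by positivity)
      have := mul_le_mul_of_nonneg_left g2 hS.le
      linarith
    have heq : (κ / S) * W₀ * (1 / (1 - θ)) + (E / S) * (κ + S + S * (1 / (1 - θ))) =
        g S := by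
      simp only [hg, hC, hL]
      field_simp
      ring
    calc f S ≤ (κ / S) * W₀ * ∑ n ∈ Finset.range (M + 1), θ ^ n +
        (E / S) * (κ + S + S * ∑ j ∈ Finset.range M, θ ^ j) := h1
      _ ≤ (κ / S) * W₀ * (1 / (1 - θ)) + (E / S) * (κ + S + S * (1 / (1 - θ))) := by
          linarith
      _ = g S := heq
  have hcob : IsCoboundedUnder (· ≤ ·) atTop f := by
    apply isCoboundedUnder_le_of_eventually_le atTop (x := 0)
    filter_upwards [eventually_gt_atTop (0:ℝ)] with S hS
    have : 0 ≤ ∫ s in t₀..(t₀ + S), w s :=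
      intervalIntegral.integral_nonneg (by linarith) (fun s _ => hpos s)
    positivity
  have hbd : IsBoundedUnder (· ≤ ·) atTop g := hgt.isBoundedUnder_le
  calc limsup f atTop ≤ limsup g atTop := limsup_le_limsup hfg hcob hbd
    _ = L := hgt.limsup_eq
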